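/- arXiv:2009.08954 — 3 statements merged into one kernel-verified Lean document; each statement's English description precedes it below -/
import Mathlib

section
/- Let R be a commutative ring and G a subgroup of its multiplicative monoid. The quotient R/G of R by the equivalence relation a ∼ b iff aG = bG, with hyperoperation aG + bG := { (ag + bh)G : g, h ∈ G } and identity 0G, is a canonical hypergroup; in particular the unique inverse of aG is (−a)G. -/
structure CanonicalHypergroup (H : Type*) where
  hmul : H → H → Set H
  e : H
  hmul_nonempty : ∀ x y, (hmul x y).Nonempty
  hmul_comm : ∀ x y, hmul x y = hmul y x
  hmul_assoc : ∀ x y z, (⋃ t ∈ hmul x y, hmul t z) = ⋃ t ∈ hmul y z, hmul x t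
  inv : H → H
  e_mem_mul_inv : ∀ x, e ∈ hmul x (inv x)
  inv_unique : ∀ x y, e ∈ hmul x y → y = inv x
  rev : ∀ x y z, z ∈ hmul x y → y ∈ hmul (inv x) z
  hmul_e : ∀ x, hmul x e = {x}

/-- `a ∼ b` iff there exist `g, h ∈ G` with `a * g = b * h`, i.e. `aG = bG`. -/
def cosetRel {R : Type*} [CommRing R] (G : Subgroup Rˣ) (a b : R) : Prop :=
  ∃ g ∈ G, ∃ h ∈ G, a * ((g : Rˣ) : R) = b * ((h : Rˣ) : R)

namespace CosetAux

variable {R : Type*} [CommRing R] (G : Subgroup Rˣ)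

lemma rel_refl (a : R) : cosetRel G a a := ⟨1, one_mem G, 1, one_mem G, rfl⟩

lemma rel_symm {a b : R} (h : cosetRel G a b) : cosetRel G b a := by
  obtain ⟨g, hg, h', hh', e⟩ := h
  exact ⟨h', hh', g, hg, e.symm⟩

lemma rel_trans {a b c : R} (h1 : cosetRel G a b) (h2 : cosetRel G b c) :
    cosetRel G a c := by
  obtain ⟨g, hg, h, hh, e1⟩ := h1
  obtain ⟨g', hg', h', hh', e2⟩ := h2
  refine ⟨g * g', mul_mem hg hg', h' * h, mul_mem hh' hh, ?_⟩
  push_cast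
  calc a * (↑g * ↑g') = (a * ↑g) * ↑g' := by ring
    _ = (b * ↑h) * ↑g' := by rw [e1]
    _ = (b * ↑g') * ↑h := by ring
    _ = (c * ↑h') * ↑h := by rw [e2]
    _ = c * (↑h' * ↑h) := by ring

lemma rel_equiv : Equivalence (cosetRel G) :=
  ⟨rel_refl G, rel_symm G, rel_trans G⟩

lemma mk_eq {a b : R} : Quot.mk (cosetRel G) a = Quot.mk (cosetRel G) b ↔ cosetRel G a b := by
  rw [Quot.eq, Equivalence.eqvGen_iff (rel_equiv G)]

/-- the sum-of-cosets set -/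
def S (a b : R) : Set (Quot (cosetRel G)) :=
  {z | ∃ g ∈ G, ∃ h ∈ G,
    z = Quot.mk (cosetRel G) (a * ((g : Rˣ) : R) + b * ((h : Rˣ) : R))}

lemma S_comm (a b : R) : S G a b = S G b a := by
  ext z
  constructor <;> rintro ⟨g, hg, h, hh, rfl⟩ <;>
    exact ⟨h, hh, g, hg, by rw [add_comm]⟩

lemma S_congr_left {a a' : R} (hrel : cosetRel G a a') (b : R) : S G a b = S G a' b := by
  have key : ∀ a a' : R, cosetRel G a a' → S G a b ⊆ S G a' b := by
    rintro x x' ⟨g0, hg0, h0, hh0, e0⟩ z ⟨g, hg, h, hh, rfl⟩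
    refine ⟨h0 * g0⁻¹ * g, mul_mem (mul_mem hh0 (inv_mem hg0)) hg, h, hh, ?_⟩
    have : x * ((g : Rˣ) : R) = x' * (((h0 * g0⁻¹ * g : Rˣ)) : R) := by
      have : x * ((g0 : Rˣ) : R) * (((g0⁻¹ * g : Rˣ)) : R)
          = x' * ((h0 : Rˣ) : R) * (((g0⁻¹ * g : Rˣ)) : R) := by rw [e0]
      calc x * ((g : Rˣ) : R) = x * ((g0 * (g0⁻¹ * g) : Rˣ) : R) := by group
        _ = x * ((g0 : Rˣ) : R) * (((g0⁻¹ * g : Rˣ)) : R) := by push_cast; ring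
        _ = x' * ((h0 : Rˣ) : R) * (((g0⁻¹ * g : Rˣ)) : R) := this
        _ = x' * ((h0 * (g0⁻¹ * g) : Rˣ) : R) := by push_cast; ring
        _ = x' * (((h0 * g0⁻¹ * g : Rˣ)) : R) := by group
    rw [this]
  exact le_antisymm (key a a' hrel) (key a' a (rel_symm G hrel))

lemma S_congr {a a' b b' : R} (ha : cosetRel G a a') (hb : cosetRel G b b') :
    S G a b = S G a' b' := by
  rw [S_congr_left G ha, S_comm, S_congr_left G hb, S_comm]

noncomputable def hmulQ (x y : Quot (cosetRel G)) : Set (Quot (cosetRel G)) :=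
  S G x.out y.out

lemma out_rel (a : R) : cosetRel G ((Quot.mk (cosetRel G) a).out) a :=
  (mk_eq G).mp (Quot.out_eq _)

lemma hmulQ_mk (a b : R) :
    hmulQ G (Quot.mk (cosetRel G) a) (Quot.mk (cosetRel G) b) = S G a b :=
  S_congr G (out_rel G a) (out_rel G b)

noncomputable def invQ (x : Quot (cosetRel G)) : Quot (cosetRel G) :=
  Quot.mk (cosetRel G) (-(x.out))

lemma rel_neg {a b : R} (h : cosetRel G a b) : cosetRel G (-a) (-b) := by
  obtain ⟨g, hg, h', hh', e⟩ := h
  exact ⟨g, hg, h', hh', by rw [neg_mul, neg_mul, e]⟩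

lemma invQ_mk (a : R) : invQ G (Quot.mk (cosetRel G) a) = Quot.mk (cosetRel G) (-a) :=
  (mk_eq G).mpr (rel_neg G (out_rel G a))

end CosetAux
open CosetAux in
theorem stmt2 {R : Type*} [CommRing R] (G : Subgroup Rˣ) :
    ∃ C : CanonicalHypergroup (Quot (cosetRel G)),
      C.e = Quot.mk (cosetRel G) 0 ∧
      (∀ a b : R, C.hmul (Quot.mk (cosetRel G) a) (Quot.mk (cosetRel G) b) =
        {z | ∃ g ∈ G, ∃ h ∈ G,
          z = Quot.mk (cosetRel G) (a * ((g : Rˣ) : R) + b * ((h : Rˣ) : R))}) ∧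
      (∀ a : R, C.inv (Quot.mk (cosetRel G) a) = Quot.mk (cosetRel G) (-a)) := by
  refine ⟨⟨hmulQ G, Quot.mk (cosetRel G) 0, ?_, ?_, ?_, invQ G, ?_, ?_, ?_, ?_⟩,
    rfl, fun a b => hmulQ_mk G a b, fun a => invQ_mk G a⟩
  · -- nonempty
    intro x y
    induction x using Quot.ind with | _ a =>
    induction y using Quot.ind with | _ b =>
    rw [hmulQ_mk]
    exact ⟨_, 1, one_mem G, 1, one_mem G, rfl⟩
  · -- comm
    intro x y
    induction x using Quot.ind with | _ a =>
    induction y using Quot.ind with | _ b =>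
    rw [hmulQ_mk, hmulQ_mk, S_comm]
  · -- assoc
    intro x y z
    induction x using Quot.ind with | _ a =>
    induction y using Quot.ind with | _ b =>
    induction z using Quot.ind with | _ c =>
    rw [hmulQ_mk, hmulQ_mk]
    ext x
    simp only [Set.mem_iUnion, exists_prop]
    constructor
    · rintro ⟨t, ⟨g, hg, h, hh, rfl⟩, hx⟩
      rw [hmulQ_mk] at hx
      obtain ⟨g', hg', h', hh', rfl⟩ := hx
      refine ⟨Quot.mk _ (b * ((h * g' * h'⁻¹ : Rˣ) : R) + c * ((1 : Rˣ) : R)),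
        ⟨h * g' * h'⁻¹, mul_mem (mul_mem hh hg') (inv_mem hh'), 1, one_mem G, rfl⟩, ?_⟩
      rw [hmulQ_mk]
      refine ⟨g * g', mul_mem hg hg', h', hh', ?_⟩
      congr 1
      have fact2 : ((h * g' * h'⁻¹ : Rˣ) : R) * ((h' : Rˣ) : R) = ((h : Rˣ) : R) * ((g' : Rˣ) : R) := by
        rw [← Units.val_mul, ← Units.val_mul]
        congr 1
        group
      have val1 : ((1 : Rˣ) : R) = 1 := Units.val_one
      have valm : ((g * g' : Rˣ) : R) = ((g : Rˣ) : R) * ((g' : Rˣ) : R) := Units.val_mul _ _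
      linear_combination -a * valm - b * fact2 - c * ((h' : Rˣ) : R) * val1
    · rintro ⟨t, ⟨g, hg, h, hh, rfl⟩, hx⟩
      rw [hmulQ_mk] at hx
      obtain ⟨g', hg', h', hh', rfl⟩ := hx
      refine ⟨Quot.mk _ (a * ((g' * h'⁻¹ : Rˣ) : R) + b * ((g : Rˣ) : R)),
        ⟨g' * h'⁻¹, mul_mem hg' (inv_mem hh'), g, hg, rfl⟩, ?_⟩
      rw [hmulQ_mk]
      refine ⟨h', hh', h * h', mul_mem hh hh', ?_⟩
      congr 1
      have fact2 : ((g' * h'⁻¹ : Rˣ) : R) * ((h' : Rˣ) : R) = ((g' : Rˣ) : R) := by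
        rw [← Units.val_mul]
        congr 1
        group
      have valm : ((h * h' : Rˣ) : R) = ((h : Rˣ) : R) * ((h' : Rˣ) : R) := Units.val_mul _ _
      linear_combination -a * fact2 - c * valm
  · -- e_mem_mul_inv
    intro x
    induction x using Quot.ind with | _ a =>
    rw [invQ_mk, hmulQ_mk]
    exact ⟨1, one_mem G, 1, one_mem G,
      (mk_eq G).mpr ⟨1, one_mem G, 1, one_mem G, by push_cast; ring⟩⟩
  · -- inv_unique
    intro x y hxy
    induction x using Quot.ind with | _ a =>
    induction y using Quot.ind with | _ b =>
    rw [hmulQ_mk] at hxy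
    obtain ⟨g, hg, h, hh, he⟩ := hxy
    rw [invQ_mk]
    apply (mk_eq G).mpr
    have h0 : cosetRel G 0 (a * ((g : Rˣ) : R) + b * ((h : Rˣ) : R)) := (mk_eq G).mp he
    obtain ⟨g', hg', h', hh', e⟩ := h0
    -- 0 * g' = (a g + b h) * h'
    refine ⟨h * h', mul_mem hh hh', g * h', mul_mem hg hh', ?_⟩
    push_cast
    linear_combination -e
  · -- rev
    intro x y z hz
    induction x using Quot.ind with | _ a =>
    induction y using Quot.ind with | _ b =>
    rw [hmulQ_mk] at hz
    obtain ⟨g, hg, h, hh, rfl⟩ := hz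
    rw [invQ_mk, hmulQ_mk]
    refine ⟨g * h⁻¹, mul_mem hg (inv_mem hh), h⁻¹, inv_mem hh, ?_⟩
    congr 1
    have f1 : ((g * h⁻¹ : Rˣ) : R) * ((h : Rˣ) : R) = ((g : Rˣ) : R) := by
      rw [← Units.val_mul]; congr 1; group
    have f2 : ((h⁻¹ : Rˣ) : R) * ((h : Rˣ) : R) = 1 := by
      rw [← Units.val_mul]; simp
    have f1' : ((g * h⁻¹ : Rˣ) : R) = ((g : Rˣ) : R) * ((h⁻¹ : Rˣ) : R) := Units.val_mul _ _
    have f2' : ((h : Rˣ) : R) * ((h⁻¹ : Rˣ) : R) = 1 := Units.mul_inv h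
    have : b = -a * ((g * h⁻¹ : Rˣ) : R)
        + (a * ((g : Rˣ) : R) + b * ((h : Rˣ) : R)) * ((h⁻¹ : Rˣ) : R) := by
      linear_combination a * f1' - b * f2'
    rw [← this]
  · -- hmul_e
    intro x
    induction x using Quot.ind with | _ a =>
    rw [hmulQ_mk]
    ext z
    simp only [Set.mem_singleton_iff]
    constructor
    · rintro ⟨g, hg, h, hh, rfl⟩
      apply (mk_eq G).mpr
      exact ⟨1, one_mem G, g, hg, by push_cast; ring⟩
    · rintro rfl
      exact ⟨1, one_mem G, 1, one_mem G, by push_cast; ring⟩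
end

section
/- In an ordered canonical hypergroup, if x > e and y ≥ e, then every element b of x * y satisfies b > e. -/
structure OrderedCanonicalHypergroup (H : Type*) [PartialOrder H] extends CanonicalHypergroup H where
  mono : ∀ a b c : H, a ≤ b → ∀ y ∈ hmul b c, ∃ x ∈ hmul a c, x ≤ y

theorem stmt7 {H : Type*} [PartialOrder H] (C : OrderedCanonicalHypergroup H)
    {x y : H} (hx : C.e < x) (hy : C.e ≤ y) : ∀ b ∈ C.hmul x y, C.e < b := by
  intro b hb
  rw [C.hmul_comm] at hb
  obtain ⟨t, ht, hle⟩ := C.mono C.e y x hy b hb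
  rw [C.hmul_comm, C.hmul_e] at ht
  exact hx.trans_le (ht ▸ hle)
end

section
/- In the quotient hypergroup H = Q/Q̇², with positive cone P = Q⁺/Q̇² ∪ {0}, the relation defined by x ≤ y iff (y * x⁻¹) ∩ P ≠ ∅ is not antisymmetric: both 3Q̇² ≤ 2Q̇² and 2Q̇² ≤ 3Q̇² hold, but 2Q̇² ≠ 3Q̇². -/
/-- The coset `a·Q̇² = { a·q² : q ∈ ℚ, q ≠ 0 }` (for `a = 0` this is `{0}`). -/
def qcoset (a : ℚ) : Set ℚ := {x | ∃ q : ℚ, q ≠ 0 ∧ x = a * q ^ 2}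

/-- The hyperoperation `aQ̇² * bQ̇² = { cQ̇² : c ∈ aQ̇² + bQ̇² }`. -/
def qhop (a b : ℚ) : Set (Set ℚ) :=
  {S | ∃ c, (∃ m ∈ qcoset a, ∃ n ∈ qcoset b, c = m + n) ∧ S = qcoset c}

/-- The positive cone `P = ℚ⁺/Q̇² ∪ {0Q̇²}`. -/
def qPos : Set (Set ℚ) := {S | ∃ a : ℚ, 0 ≤ a ∧ S = qcoset a}

/-- `−P`. -/
def qNeg : Set (Set ℚ) := {S | ∃ a : ℚ, 0 ≤ a ∧ S = qcoset (-a)}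

/-- With `x ≤ y` defined by `(y * x⁻¹) ∩ P ≠ ∅`, both `3Q̇² ≤ 2Q̇²` and
`2Q̇² ≤ 3Q̇²`, yet `2Q̇² ≠ 3Q̇²`: the relation is not antisymmetric. -/
theorem stmt8 :
    (∃ S ∈ qhop 2 (-3), S ∈ qPos) ∧ (∃ S ∈ qhop 3 (-2), S ∈ qPos) ∧
      qcoset 2 ≠ qcoset 3 := by
  refine ⟨⟨qcoset 5, ⟨5, ⟨8, ⟨2, by norm_num, by norm_num⟩, -3, ⟨1, one_ne_zero, by norm_num⟩,
      by norm_num⟩, rfl⟩, ⟨5, by norm_num, rfl⟩⟩,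
    ⟨qcoset 1, ⟨1, ⟨3, ⟨1, one_ne_zero, by norm_num⟩, -2, ⟨1, one_ne_zero, by norm_num⟩,
      by norm_num⟩, rfl⟩, ⟨1, by norm_num, rfl⟩⟩, ?_⟩
  intro h
  have h2 : (2 : ℚ) ∈ qcoset 2 := ⟨1, one_ne_zero, by norm_num⟩
  rw [h] at h2
  obtain ⟨q, hq, hq2⟩ := h2
  have hqs : q ^ 2 = 2 / 3 := by linarith
  have hnum : q.num ^ 2 = 2 := by
    have := congrArg Rat.num hqs
    rw [show ((2:ℚ)/3).num = 2 by norm_num [Rat.num_div_den]] at this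
    simpa [Rat.num_pow] using this
  have h1 : q.num ≤ 1 := by nlinarith [sq_nonneg (q.num - 1)]
  have h2 : -1 ≤ q.num := by nlinarith [sq_nonneg (q.num + 1)]
  interval_cases q.num <;> omega
end
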